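/- arXiv:2208.00146 — 2 statements merged into one kernel-verified Lean document; each statement's English description precedes it below -/
import Mathlib

section
/- Let P ≻ 0, D₁ ≻ 0, D₂ ≻ 0 be symmetric matrices and let A, B₁, B₂ be real matrices of compatible dimensions. Suppose there exists α ≥ 0 such that the block matrix M = [[(γ−2α)P − A^T P − P A, −P B₁, −P B₂], [−B₁^T P, α D₁, 0], [−B₂^T P, 0, α D₂]] is positive definite. Then for all z, d₁, d₂ with z^T P z ≥ 1, d₁^T D₁ d₁ ≤ 1, d₂^T D₂ d₂ ≤ 1, the quantity (Az + B₁d₁ + B₂d₂)^T P z + z^T P (Az + B₁d₁ + B₂d₂) is strictly less than γ z^T P z. -/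
open Matrix

/-- Lemma 2 of the paper: the LMI implies quadratic γ-boundedness. -/
theorem quadratic_gamma_boundedness_LMI
    (n m₁ m₂ : ℕ) (γ : ℝ)
    (P : Matrix (Fin n) (Fin n) ℝ)
    (D₁ : Matrix (Fin m₁) (Fin m₁) ℝ)
    (D₂ : Matrix (Fin m₂) (Fin m₂) ℝ)
    (A : Matrix (Fin n) (Fin n) ℝ)
    (B₁ : Matrix (Fin n) (Fin m₁) ℝ)
    (B₂ : Matrix (Fin n) (Fin m₂) ℝ)
    (hP : P.PosDef) (hD₁ : D₁.PosDef) (hD₂ : D₂.PosDef)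
    (hM : ∃ α : ℝ, 0 ≤ α ∧
      (Matrix.fromBlocks
        ((γ - 2 * α) • P - Aᵀ * P - P * A)
        (Matrix.fromCols (-(P * B₁)) (-(P * B₂)))
        (Matrix.fromRows (-(B₁ᵀ * P)) (-(B₂ᵀ * P)))
        (Matrix.fromBlocks (α • D₁) 0 0 (α • D₂))).PosDef) :
    ∀ (z : Fin n → ℝ) (d₁ : Fin m₁ → ℝ) (d₂ : Fin m₂ → ℝ),
      1 ≤ z ⬝ᵥ P.mulVec z →
      d₁ ⬝ᵥ D₁.mulVec d₁ ≤ 1 →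
      d₂ ⬝ᵥ D₂.mulVec d₂ ≤ 1 →
      (A.mulVec z + B₁.mulVec d₁ + B₂.mulVec d₂) ⬝ᵥ P.mulVec z +
        z ⬝ᵥ P.mulVec (A.mulVec z + B₁.mulVec d₁ + B₂.mulVec d₂) <
      γ * (z ⬝ᵥ P.mulVec z) := by
  obtain ⟨α, hα, hpd⟩ := hM
  intro z d₁ d₂ hz hd1 hd2
  have hzne : z ≠ 0 := by
    rintro rfl
    simp at hz; linarith
  have hvne : (Sum.elim z (Sum.elim d₁ d₂) : (Fin n ⊕ (Fin m₁ ⊕ Fin m₂)) → ℝ) ≠ 0 := by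
    intro h
    apply hzne
    ext i
    exact congrFun h (Sum.inl i)
  have key := hpd.dotProduct_mulVec_pos hvne
  simp only [star_trivial, fromBlocks_mulVec, fromCols_mulVec_sumElim, fromRows_mulVec,
    sumElim_dotProduct_sumElim, Matrix.sub_mulVec, Matrix.smul_mulVec,
    Matrix.neg_mulVec, Matrix.mulVec_add, Matrix.add_mulVec,
    dotProduct_add, dotProduct_sub, dotProduct_smul, dotProduct_neg, neg_dotProduct,
    Matrix.mulVec_mulVec, Matrix.zero_mulVec, add_zero, zero_add, dotProduct_zero,
    smul_eq_mul, Sum.elim_inl, Sum.elim_inr] at key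
  simp only [Sum.elim_comp_inl, Sum.elim_comp_inr, fromCols_mulVec_sumElim,
    Matrix.neg_mulVec, dotProduct_add, dotProduct_neg, Matrix.mulVec_mulVec] at key
  have aux : ∀ {k l : ℕ} (B : Matrix (Fin k) (Fin l) ℝ) (d : Fin l → ℝ) (u : Fin k → ℝ),
      (B *ᵥ d) ⬝ᵥ u = d ⬝ᵥ (Bᵀ *ᵥ u) := fun B d u => by
    rw [Matrix.dotProduct_mulVec, Matrix.vecMul_transpose]
  have h1 : (A *ᵥ z) ⬝ᵥ (P *ᵥ z) = z ⬝ᵥ (Aᵀ * P) *ᵥ z := by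
    rw [aux, Matrix.mulVec_mulVec]
  have h2 : (B₁ *ᵥ d₁) ⬝ᵥ (P *ᵥ z) = d₁ ⬝ᵥ (B₁ᵀ * P) *ᵥ z := by
    rw [aux, Matrix.mulVec_mulVec]
  have h3 : (B₂ *ᵥ d₂) ⬝ᵥ (P *ᵥ z) = d₂ ⬝ᵥ (B₂ᵀ * P) *ᵥ z := by
    rw [aux, Matrix.mulVec_mulVec]
  have h4 : z ⬝ᵥ P *ᵥ (A *ᵥ z) = z ⬝ᵥ (P * A) *ᵥ z := by rw [Matrix.mulVec_mulVec]
  have h5 : z ⬝ᵥ P *ᵥ (B₁ *ᵥ d₁) = z ⬝ᵥ (P * B₁) *ᵥ d₁ := by rw [Matrix.mulVec_mulVec]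
  have h6 : z ⬝ᵥ P *ᵥ (B₂ *ᵥ d₂) = z ⬝ᵥ (P * B₂) *ᵥ d₂ := by rw [Matrix.mulVec_mulVec]
  simp only [add_dotProduct, dotProduct_add, Matrix.mulVec_add, h1, h2, h3, h4, h5, h6]
  nlinarith [key, mul_nonneg hα (sub_nonneg.2 hz), mul_nonneg hα (sub_nonneg.2 hd1),
    mul_nonneg hα (sub_nonneg.2 hd2)]
end

section
/- Suppose V : ℝ → ℝ is differentiable, γ ≤ 0, and for every t, V(t) ≥ 1 implies V'(t) < γ V(t). If V(0) ≤ 1, then V(t) ≤ 1 for all t ≥ 0. -/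
theorem le_of_deriv_neg_of_eq {f : ℝ → ℝ} {a c : ℝ} (hf : Differentiable ℝ f) (ha : f a ≤ c)
    (hderiv : ∀ x, a ≤ x → f x = c → deriv f x < 0) : ∀ x, a ≤ x → f x ≤ c := fun _ hx =>
  image_le_of_deriv_right_lt_deriv_boundary (B := fun _ => c) (B' := fun _ => 0)
    hf.continuous.continuousOn (fun y _ => (hf y).hasDerivAt.hasDerivWithinAt) ha
    (fun _ => hasDerivAt_const _ c) (fun y hy => hderiv y hy.1) ⟨hx, le_rfl⟩

/-- Lemma 1: quadratic γ-boundedness with γ ≤ 0 makes the sublevel set {V ≤ 1}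
positively invariant. -/
theorem sublevel_invariance
    (V : ℝ → ℝ) (γ : ℝ)
    (hdiff : Differentiable ℝ V)
    (hγ : γ ≤ 0)
    (hdec : ∀ t : ℝ, 1 ≤ V t → deriv V t < γ * V t)
    (h0 : V 0 ≤ 1) :
    ∀ t : ℝ, 0 ≤ t → V t ≤ 1 := by
  refine le_of_deriv_neg_of_eq hdiff h0 fun t _ hVt => ?_
  calc deriv V t < γ * V t := hdec t hVt.ge
    _ = γ := by rw [hVt, mul_one]
    _ ≤ 0 := hγ
end
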